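/- arXiv:2102.03177 — 6 statements merged into one kernel-verified Lean document; each statement's English description precedes it below -/
import Mathlib

section
/- Let P, M be Hilbert spaces, D : M → M* bounded linear and elliptic with constant c_D > 0 and operator norm C_D, K : P → M* bounded linear, and suppose there is a closed subspace P_ker ⊆ P and a constant c_K > 0 such that c_K ‖q‖_P ≤ ‖K q‖_{M*} for all q ∈ P_ker. Then the operator L := K* D⁻¹ K satisfies ⟨L q, q⟩ ≥ (c_D c_K² / C_D²) ‖q‖_P² for all q ∈ P_ker. -/
open scoped RealInnerProductSpace

/-- Ellipticity of `L = K* D⁻¹ K` on the kernel subspace: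
`⟨L q, q⟩ ≥ (c_D c_K² / C_D²) ‖q‖²` for all `q ∈ P_ker`. -/
theorem stmt1
    {P M : Type*} [NormedAddCommGroup P] [InnerProductSpace ℝ P] [CompleteSpace P]
    [NormedAddCommGroup M] [InnerProductSpace ℝ M] [CompleteSpace M]
    (D : M →L[ℝ] StrongDual ℝ M) (K : P →L[ℝ] StrongDual ℝ M)
    (c_D C_D : ℝ) (hc_D : 0 < c_D) (hD : ∀ m : M, c_D * ‖m‖ ^ 2 ≤ D m m)
    (hCD : ‖D‖ = C_D)
    (Dinv : StrongDual ℝ M →L[ℝ] M)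
    (hDinv₁ : ∀ f : StrongDual ℝ M, D (Dinv f) = f)
    (hDinv₂ : ∀ m : M, Dinv (D m) = m)
    (P_ker : Submodule ℝ P) (hclosed : IsClosed (P_ker : Set P))
    (c_K : ℝ) (hc_K : 0 < c_K)
    (hK : ∀ q ∈ P_ker, c_K * ‖q‖ ≤ ‖K q‖) :
    ∀ q ∈ P_ker, c_D * c_K ^ 2 / C_D ^ 2 * ‖q‖ ^ 2 ≤ K q (Dinv (K q)) := by
  intro q hq
  set m := Dinv (K q) with hm_def
  have hm : D m = K q := hDinv₁ _
  have h1 : c_D * ‖m‖ ^ 2 ≤ K q m := by rw [← hm]; exact hD m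
  have hKnorm : ‖K q‖ ≤ C_D * ‖m‖ := by
    rw [← hm, ← hCD]; exact D.le_opNorm m
  have hck : c_K * ‖q‖ ≤ C_D * ‖m‖ := (hK q hq).trans hKnorm
  have hC0 : 0 ≤ C_D := hCD ▸ norm_nonneg D
  rcases eq_or_lt_of_le hC0 with hC | hC
  · have hq0 : ‖q‖ = 0 := by
      nlinarith [norm_nonneg q, norm_nonneg m]
    have : (0:ℝ) ≤ K q m := le_trans (by positivity) h1
    rw [hq0]
    simpa using this
  · have key : (c_K * ‖q‖) * (c_K * ‖q‖) ≤ (C_D * ‖m‖) * (C_D * ‖m‖) :=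
      mul_le_mul hck hck (by positivity) (by positivity)
    rw [div_mul_eq_mul_div, div_le_iff₀ (by positivity)]
    nlinarith [sq_nonneg C_D, hC, h1, key]
end

section
/- Let P, M, Q be Hilbert spaces with P ↪ H Gelfand triple, operators A, K, D, B as in Assumption 2.1 (A : H → H* bounded with norm C_A; K : P → M* bounded; D : M → M* bounded and elliptic with constant c_D; B : P → Q* bounded and inf-sup stable; K bounded below on P_ker = ker B). Then for every g ∈ P* the system (A + C_A·id) p̄ − K* m̄ + B* λ̄ = g in P*, K p̄ + D m̄ = 0 in M*, B p̄ = 0 in Q*, has a unique solution (p̄, m̄, λ̄) ∈ P_ker × M × Q which depends continuously on g: ‖p̄‖_P + ‖m̄‖_M + ‖λ̄‖_Q ≲ ‖g‖_{P*}. -/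
open scoped RealInnerProductSpace

noncomputable def rsz {E : Type*} [NormedAddCommGroup E] [InnerProductSpace ℝ E]
    [CompleteSpace E] : StrongDual ℝ E →L[ℝ] E :=
  LinearMap.mkContinuous
    { toFun := fun f => (InnerProductSpace.toDual ℝ E).symm f
      map_add' := fun f g => by simp
      map_smul' := fun c f => by simp }
    1 (fun f => by simp)

lemma inner_rsz {E : Type*} [NormedAddCommGroup E] [InnerProductSpace ℝ E]
    [CompleteSpace E] (f : StrongDual ℝ E) (x : E) :
    ⟪rsz f, x⟫ = f x := InnerProductSpace.toDual_symm_apply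

lemma norm_rsz {E : Type*} [NormedAddCommGroup E] [InnerProductSpace ℝ E]
    [CompleteSpace E] (f : StrongDual ℝ E) : ‖rsz f‖ = ‖f‖ := by
  simp [rsz, LinearMap.mkContinuous]


private lemma auxApos {H : Type*} [NormedAddCommGroup H] [InnerProductSpace ℝ H]
    (A : H →L[ℝ] StrongDual ℝ H) (C_A : ℝ) (hCA : ‖A‖ = C_A) (x : H) :
    0 ≤ A x x + C_A * ⟪x, x⟫ := by
  have hb : ‖A x x‖ ≤ ‖A x‖ * ‖x‖ := (A x).le_opNorm x
  have hb2 : ‖A x‖ ≤ ‖A‖ * ‖x‖ := A.le_opNorm x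
  rw [Real.norm_eq_abs] at hb
  have hb3 := (abs_le.mp hb).1
  have h2 : ⟪x, x⟫ = ‖x‖ * ‖x‖ := real_inner_self_eq_norm_mul_norm x
  rw [h2, ← hCA]
  nlinarith [norm_nonneg x, norm_nonneg (A x)]

private lemma auxCoer {c_D c_K d x m : ℝ} (hc_D : 0 < c_D) (hd : 0 < d)
    (hck : 0 ≤ c_K) (h2 : c_K * x ≤ d * m) (hm : 0 ≤ m) (hx : 0 ≤ x) :
    c_D * c_K ^ 2 / d ^ 2 * x * x ≤ c_D * m ^ 2 := by
  rw [div_mul_eq_mul_div, div_mul_eq_mul_div, div_le_iff₀ (by positivity)]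
  have h3 := mul_self_le_mul_self (mul_nonneg hck hx) h2
  nlinarith [mul_le_mul_of_nonneg_left h3 hc_D.le]

private lemma auxDiv {α g n : ℝ} (hα : 0 < α) (hg : 0 ≤ g) (hn : 0 ≤ n)
    (h : α * n * n ≤ g * n) : n ≤ α⁻¹ * g := by
  rcases eq_or_lt_of_le hn with h0 | h0
  · rw [← h0]; positivity
  · rw [le_inv_mul_iff₀ hα]
    exact le_of_mul_le_mul_right (by nlinarith) h0


private lemma auxSup {b qn mn y : ℝ} (hq : 0 < qn) (hm : 0 < mn) (h : b ≤ qn * y) :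
    b / (qn * mn) ≤ y / mn := by
  rw [div_le_div_iff₀ (by positivity) hm]
  nlinarith [mul_le_mul_of_nonneg_right h hm.le]

private lemma auxZero2 {c x : ℝ} (hc : 0 < c) (h : c * x ≤ 0) (hx : 0 ≤ x) : x = 0 := by
  nlinarith

private lemma auxZeroSq {c x : ℝ} (hc : 0 < c) (h : c * x ^ 2 ≤ 0) (hx : 0 ≤ x) : x = 0 := by
  by_contra hne
  have h1 : 0 < x := lt_of_le_of_ne hx (Ne.symm hne)
  have h2 : 0 < x ^ 2 := by positivity
  nlinarith [mul_pos hc h2]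

private lemma auxLam {β l rn g na ai pb : ℝ} (hβ : 0 < β) (h1 : β * l ≤ rn)
    (h2 : rn ≤ g + na * pb) (h3 : pb ≤ ai * g) (hna : 0 ≤ na) :
    l ≤ β⁻¹ * ((1 + na * ai) * g) := by
  rw [le_inv_mul_iff₀ hβ]
  nlinarith [mul_le_mul_of_nonneg_left h3 hna]

private lemma auxSum {g p m l a1 ck kk b1 c1 : ℝ} (hg : 0 ≤ g) (hp : p ≤ a1 * g)
    (hm : m ≤ ck * (kk * p)) (hck : 0 ≤ ck) (hkk : 0 ≤ kk) (hl : l ≤ b1 * (c1 * g))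
    (hp0 : 0 ≤ p) :
    p + m + l ≤ (a1 + ck * kk * a1 + b1 * c1 + 1) * g := by
  have h5 : m ≤ ck * kk * (a1 * g) := by nlinarith [mul_le_mul_of_nonneg_left hp (mul_nonneg hck hkk)]
  nlinarith

set_option maxHeartbeats 1000000 in
/-- Existence, uniqueness and continuous dependence for the stationary auxiliary
system `(A + C_A·id) p̄ − K* m̄ + B* λ̄ = g`, `K p̄ + D m̄ = 0`, `B p̄ = 0`. -/
theorem stmt6
    {P H M Q : Type*} [NormedAddCommGroup P] [InnerProductSpace ℝ P] [CompleteSpace P]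
    [NormedAddCommGroup H] [InnerProductSpace ℝ H] [CompleteSpace H]
    [NormedAddCommGroup M] [InnerProductSpace ℝ M] [CompleteSpace M]
    [NormedAddCommGroup Q] [InnerProductSpace ℝ Q] [CompleteSpace Q]
    -- Gelfand triple: dense continuous embedding P ↪ H
    (i : P →L[ℝ] H) (hi : Function.Injective i) (hdense : DenseRange i)
    -- Assumption 2.1
    (A : H →L[ℝ] StrongDual ℝ H) (C_A : ℝ) (hCA : ‖A‖ = C_A)
    (K : P →L[ℝ] StrongDual ℝ M)
    (D : M →L[ℝ] StrongDual ℝ M)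
    (B : P →L[ℝ] StrongDual ℝ Q)
    (c_D : ℝ) (hc_D : 0 < c_D) (hD : ∀ m : M, c_D * ‖m‖ ^ 2 ≤ D m m)
    (β : ℝ) (hβ : 0 < β)
    (hinfsup : ∀ μ : Q, μ ≠ 0 → β ≤ ⨆ q : P, B q μ / (‖q‖ * ‖μ‖))
    (c_K : ℝ) (hc_K : 0 < c_K)
    (hK : ∀ q ∈ LinearMap.ker (B : P →ₗ[ℝ] StrongDual ℝ Q), c_K * ‖q‖ ≤ ‖K q‖)
    (Bstar : Q →L[ℝ] StrongDual ℝ P)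
    (hBstar : ∀ (μ : Q) (q : P), Bstar μ q = B q μ) :
    ∃ C : ℝ, 0 < C ∧ ∀ g : StrongDual ℝ P,
      ∃ (p : P) (m : M) (lam : Q),
        (p ∈ LinearMap.ker (B : P →ₗ[ℝ] StrongDual ℝ Q) ∧
          (∀ q : P, A (i p) (i q) + C_A * ⟪i p, i q⟫ - K q m + Bstar lam q = g q) ∧
          K p + D m = 0 ∧
          ‖p‖ + ‖m‖ + ‖lam‖ ≤ C * ‖g‖) ∧
        (∀ (p' : P) (m' : M) (lam' : Q),
          p' ∈ LinearMap.ker (B : P →ₗ[ℝ] StrongDual ℝ Q) →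
          (∀ q : P, A (i p') (i q) + C_A * ⟪i p', i q⟫ - K q m' + Bstar lam' q = g q) →
          K p' + D m' = 0 →
          p' = p ∧ m' = m ∧ lam' = lam) := by
  classical
  -- inverse of D via Lax-Milgram
  have hDco : IsCoercive D := ⟨c_D, hc_D, fun m => by have := hD m; nlinarith [this]⟩
  set ED : M ≃L[ℝ] M := hDco.continuousLinearEquivOfBilin with hED
  have hEDapp : ∀ m w : M, ⟪ED m, w⟫ = D m w := fun m w =>
    hDco.continuousLinearEquivOfBilin_apply m w
  -- map p ↦ m(p)
  set mMap : P →L[ℝ] M := -((ED.symm : M →L[ℝ] M).comp ((rsz : StrongDual ℝ M →L[ℝ] M).comp K)) with hmM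
  have hmKD : ∀ p : P, K p + D (mMap p) = 0 := by
    intro p
    have h1 : ∀ w : M, D (mMap p) w = -(K p w) := by
      intro w
      have : (ED (mMap p)) = -(rsz (K p)) := by
        simp [hmM]
      calc D (mMap p) w = ⟪ED (mMap p), w⟫ := (hEDapp _ _).symm
        _ = ⟪-(rsz (K p)), w⟫ := by rw [this]
        _ = -(K p w) := by rw [inner_neg_left, inner_rsz]
    ext w
    simp [h1 w]
  have hDmm : ∀ p : P, D (mMap p) (mMap p) = -(K p (mMap p)) := by
    intro p
    have := hmKD p
    have h2 := congrArg (fun f => f (mMap p)) this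
    simp at h2
    linarith [h2]
  have hKnorm : ∀ p : P, ‖K p‖ ≤ ‖D‖ * ‖mMap p‖ := by
    intro p
    have h3 : K p = -(D (mMap p)) := eq_neg_of_add_eq_zero_left (hmKD p)
    rw [h3, norm_neg]
    exact (D.le_opNorm _)
  -- the bilinear form a(p,q) = A(ip)(iq) + C_A⟪ip,iq⟫ - K q (mMap p)
  set precompi : (H →L[ℝ] ℝ) →L[ℝ] (P →L[ℝ] ℝ) :=
    (ContinuousLinearMap.compL ℝ P H ℝ).flip i with hpci
  set F1 : P →L[ℝ] P →L[ℝ] ℝ := precompi.comp (A.comp i) with hF1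
  set F2 : P →L[ℝ] P →L[ℝ] ℝ := C_A • (precompi.comp ((innerSL ℝ).comp i)) with hF2
  set F3 : P →L[ℝ] P →L[ℝ] ℝ := (ContinuousLinearMap.flip K).comp mMap with hF3
  set a : P →L[ℝ] P →L[ℝ] ℝ := F1 + F2 - F3 with haa
  have ha : ∀ p q : P, a p q = A (i p) (i q) + C_A * ⟪i p, i q⟫ - K q (mMap p) := by
    intro p q
    simp [haa, hF1, hF2, hF3, hpci]
  -- positivity facts
  have hApos : ∀ x : H, 0 ≤ A x x + C_A * ⟪x, x⟫ := auxApos A C_A hCA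
  have hDmMap : ∀ p : P, c_D * ‖mMap p‖ ^ 2 ≤ -(K p (mMap p)) := by
    intro p
    have := hD (mMap p)
    rw [hDmm p] at this
    exact this
  -- coercivity constant
  set d : ℝ := max ‖D‖ 1 with hd
  have hd1 : (1:ℝ) ≤ d := le_max_right _ _
  have hd0 : 0 < d := lt_of_lt_of_le one_pos hd1
  set α : ℝ := c_D * c_K ^ 2 / d ^ 2 with hαdef
  have hα0 : 0 < α := by positivity
  have hcoer : ∀ p ∈ LinearMap.ker (B : P →ₗ[ℝ] StrongDual ℝ Q), α * ‖p‖ * ‖p‖ ≤ a p p := by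
    intro p hp
    have h1 := hDmMap p
    have h2 : c_K * ‖p‖ ≤ d * ‖mMap p‖ := by
      calc c_K * ‖p‖ ≤ ‖K p‖ := hK p hp
        _ ≤ ‖D‖ * ‖mMap p‖ := hKnorm p
        _ ≤ d * ‖mMap p‖ := by
          have h0 := norm_nonneg (mMap p)
          have h1 : ‖D‖ ≤ d := le_max_left _ _
          exact mul_le_mul_of_nonneg_right h1 h0
    have h3 := hApos (i p)
    rw [ha p p]
    have hmn : 0 ≤ ‖mMap p‖ := norm_nonneg _
    have hpn : 0 ≤ ‖p‖ := norm_nonneg _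
    have key : α * ‖p‖ * ‖p‖ ≤ c_D * ‖mMap p‖ ^ 2 :=
      auxCoer hc_D hd0 hc_K.le h2 hmn hpn
    linarith
  -- the subspace V = ker B
  set V : Submodule ℝ P := LinearMap.ker (B : P →ₗ[ℝ] StrongDual ℝ Q) with hV
  have hVclosed : IsClosed (V : Set P) := ContinuousLinearMap.isClosed_ker B
  haveI : CompleteSpace V := hVclosed.completeSpace_coe
  -- restricted bilinear form
  set precompV : (P →L[ℝ] ℝ) →L[ℝ] (↥V →L[ℝ] ℝ) :=
    (ContinuousLinearMap.compL ℝ ↥V P ℝ).flip V.subtypeL with hpcV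
  set aV : ↥V →L[ℝ] ↥V →L[ℝ] ℝ := precompV.comp (a.comp V.subtypeL) with haV
  have haVapp : ∀ v w : ↥V, aV v w = a (v : P) (w : P) := by
    intro v w; simp [haV, hpcV]
  have haVco : IsCoercive aV := by
    refine ⟨α, hα0, fun v => ?_⟩
    rw [haVapp v v]
    have := hcoer (v : P) v.2
    simpa using this
  set E := haVco.continuousLinearEquivOfBilin with hE
  have hEapp : ∀ v w : ↥V, ⟪E v, w⟫ = aV v w := fun v w =>
    haVco.continuousLinearEquivOfBilin_apply v w
  -- Riesz form of B and its adjoint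
  set B' : P →L[ℝ] Q := (rsz : StrongDual ℝ Q →L[ℝ] Q).comp B with hB'
  have hB'inner : ∀ (q : P) (μ : Q), ⟪B' q, μ⟫ = B q μ := fun q μ => inner_rsz _ _
  set Ba : Q →L[ℝ] P := ContinuousLinearMap.adjoint B' with hBa
  have hBaInner : ∀ (μ : Q) (q : P), ⟪q, Ba μ⟫ = B q μ := by
    intro μ q
    rw [hBa, ContinuousLinearMap.adjoint_inner_right, hB'inner]
  have hBalow : ∀ μ : Q, β * ‖μ‖ ≤ ‖Ba μ‖ := by
    intro μ
    rcases eq_or_ne μ 0 with rfl | hμ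
    · simp
    · have hμn : 0 < ‖μ‖ := norm_pos_iff.mpr hμ
      have h1 : (⨆ q : P, B q μ / (‖q‖ * ‖μ‖)) ≤ ‖Ba μ‖ / ‖μ‖ := by
        apply ciSup_le
        intro q
        rcases eq_or_ne q 0 with rfl | hq
        · simp only [map_zero, ContinuousLinearMap.zero_apply, zero_div]
          positivity
        · have hqn : 0 < ‖q‖ := norm_pos_iff.mpr hq
          apply auxSup hqn hμn
          rw [← hBaInner μ q]
          exact real_inner_le_norm q (Ba μ)
      have h2 := (hinfsup μ hμ).trans h1
      rw [le_div_iff₀ hμn] at h2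
      exact h2
  have hBaanti : AntilipschitzWith (β⁻¹.toNNReal) Ba := by
    apply ContinuousLinearMap.antilipschitz_of_bound
    intro x
    have h1 := hBalow x
    rw [Real.coe_toNNReal _ (by positivity)]
    rw [le_inv_mul_iff₀ hβ]
    exact h1
  have hclosed : IsClosed (LinearMap.range (Ba : Q →ₗ[ℝ] P) : Set P) :=
    by rw [LinearMap.coe_range]; exact hBaanti.isClosed_range Ba.uniformContinuous
  haveI : CompleteSpace (LinearMap.range (Ba : Q →ₗ[ℝ] P)) := hclosed.completeSpace_coe
  have horth : (LinearMap.range (Ba : Q →ₗ[ℝ] P))ᗮ = LinearMap.ker (B' : P →ₗ[ℝ] Q) := by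
    ext q
    rw [Submodule.mem_orthogonal, LinearMap.mem_ker]
    constructor
    · intro h
      have h2 := h (Ba (B' q)) (LinearMap.mem_range_self _ (B' q))
      rw [hBa, ContinuousLinearMap.adjoint_inner_left] at h2
      exact inner_self_eq_zero.mp h2
    · intro hq x hx
      obtain ⟨μ, rfl⟩ := hx
      rw [ContinuousLinearMap.coe_coe] at hq
      rw [hBa, ContinuousLinearMap.coe_coe, ContinuousLinearMap.adjoint_inner_left, hq, inner_zero_right]
  have hkerB' : LinearMap.ker (B' : P →ₗ[ℝ] Q) = V := by
    ext q
    rw [LinearMap.mem_ker, hV, LinearMap.mem_ker]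
    simp only [ContinuousLinearMap.coe_coe]
    constructor
    · intro h
      ext μ
      rw [← hB'inner, h, inner_zero_left]
      rfl
    · intro h
      rw [hB']
      simp only [ContinuousLinearMap.comp_apply, h, map_zero]
  have hrange : LinearMap.range (Ba : Q →ₗ[ℝ] P) = Vᗮ := by
    rw [← hkerB', ← horth, Submodule.orthogonal_orthogonal]
  -- the constant
  refine ⟨α⁻¹ + c_D⁻¹ * ‖K‖ * α⁻¹ + β⁻¹ * (1 + ‖a‖ * α⁻¹) + 1, ?_, fun g => ?_⟩
  · have h1 : 0 ≤ α⁻¹ := inv_nonneg.mpr hα0.le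
    have h2 : 0 ≤ c_D⁻¹ * ‖K‖ * α⁻¹ :=
      mul_nonneg (mul_nonneg (inv_nonneg.mpr hc_D.le) K.opNorm_nonneg) h1
    have h3 : 0 ≤ β⁻¹ * (1 + ‖a‖ * α⁻¹) :=
      mul_nonneg (inv_nonneg.mpr hβ.le)
        (add_nonneg zero_le_one (mul_nonneg a.opNorm_nonneg h1))
    linarith
  -- solve
  set gV : ↥V →L[ℝ] ℝ := g.comp V.subtypeL with hgV
  set pV : ↥V := E.symm (rsz gV) with hpV
  have hsolV : ∀ w : ↥V, a (pV : P) (w : P) = g (w : P) := by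
    intro w
    have h1 : ⟪E pV, w⟫ = aV pV w := hEapp pV w
    rw [hpV, ContinuousLinearEquiv.apply_symm_apply, inner_rsz, haVapp] at h1
    rw [← h1]
    simp [hgV]
  set pbar : P := (pV : P) with hpbar
  have hpmem : pbar ∈ V := pV.2
  set mbar : M := mMap pbar with hmbar
  set r : StrongDual ℝ P := g - a pbar with hr
  have hrV : ∀ w ∈ V, r w = 0 := by
    intro w hw
    have h5 : a pbar w = g w := hsolV ⟨w, hw⟩
    rw [hr, ContinuousLinearMap.sub_apply, h5, sub_self]
  have hrhat : rsz r ∈ Vᗮ := by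
    rw [Submodule.mem_orthogonal]
    intro u hu
    rw [real_inner_comm, inner_rsz]
    exact hrV u hu
  rw [← hrange] at hrhat
  obtain ⟨lam, hlam⟩ := hrhat
  rw [ContinuousLinearMap.coe_coe] at hlam
  have hlamEq : ∀ q : P, Bstar lam q = r q := by
    intro q
    rw [hBstar, ← hBaInner, hlam, real_inner_comm, inner_rsz]
  have heq1 : ∀ q : P, A (i pbar) (i q) + C_A * ⟪i pbar, i q⟫ - K q mbar + Bstar lam q = g q := by
    intro q
    have h1 := hlamEq q
    rw [hr, ContinuousLinearMap.sub_apply] at h1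
    have h2 := ha pbar q
    linear_combination h1 - h2
  have hgnn : (0:ℝ) ≤ ‖g‖ := norm_nonneg g
  -- bounds
  have hpb : ‖pbar‖ ≤ α⁻¹ * ‖g‖ := by
    apply auxDiv hα0 hgnn (norm_nonneg pbar)
    have h1 : a pbar pbar = g pbar := hsolV pV
    have h2 := hcoer pbar hpmem
    have h3 : g pbar ≤ ‖g‖ * ‖pbar‖ := by
      have h4 := g.le_opNorm pbar
      rw [Real.norm_eq_abs] at h4
      exact (le_abs_self _).trans h4
    exact (h2.trans_eq h1).trans h3
  have hmb : ‖mbar‖ ≤ c_D⁻¹ * (‖K‖ * ‖pbar‖) := by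
    apply auxDiv hc_D (by positivity) (norm_nonneg mbar)
    have h1 := hDmMap pbar
    have h2 : -(K pbar mbar) ≤ ‖K‖ * ‖pbar‖ * ‖mbar‖ := by
      have h3 := (K pbar).le_opNorm mbar
      rw [Real.norm_eq_abs] at h3
      have h4 := K.le_opNorm pbar
      have h5 : -(K pbar mbar) ≤ |K pbar mbar| := neg_le_abs _
      have h6 : ‖K pbar‖ * ‖mbar‖ ≤ ‖K‖ * ‖pbar‖ * ‖mbar‖ :=
        mul_le_mul_of_nonneg_right h4 (norm_nonneg _)
      linarith
    have h7 : c_D * ‖mbar‖ * ‖mbar‖ = c_D * ‖mbar‖ ^ 2 := by ring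
    rw [h7]
    exact h1.trans h2
  have hlb : ‖lam‖ ≤ β⁻¹ * ((1 + ‖a‖ * α⁻¹) * ‖g‖) := by
    have h1 := hBalow lam
    rw [hlam, norm_rsz] at h1
    have h2 : ‖r‖ ≤ ‖g‖ + ‖a‖ * ‖pbar‖ := by
      rw [hr]
      refine (norm_sub_le g (a pbar)).trans ?_
      have := a.le_opNorm pbar
      linarith
    exact auxLam hβ h1 h2 hpb a.opNorm_nonneg
  refine ⟨pbar, mbar, lam, ⟨hpmem, heq1, hmKD pbar, ?_⟩, ?_⟩
  · exact auxSum hgnn hpb hmb (inv_nonneg.mpr hc_D.le) K.opNorm_nonneg hlb (norm_nonneg pbar)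
  -- uniqueness
  intro p' m' lam' hp' heq' hKD'
  have hdp : p' - pbar ∈ V := Submodule.sub_mem _ hp' hpmem
  have h2 : K pbar + D mbar = 0 := hmKD pbar
  have hKdd : K (p' - pbar) + D (m' - mbar) = 0 := by
    rw [map_sub, map_sub]
    have h3 : K p' - K pbar + (D m' - D mbar) = K p' + D m' - (K pbar + D mbar) := by abel
    rw [h3, hKD', h2, sub_zero]
  have heqd : ∀ q : P, A (i (p' - pbar)) (i q) + C_A * ⟪i (p' - pbar), i q⟫
      - K q (m' - mbar) + Bstar (lam' - lam) q = 0 := by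
    intro q
    have h1 := heq' q
    have h2' := heq1 q
    have e1 : A (i (p' - pbar)) (i q) = A (i p') (i q) - A (i pbar) (i q) := by
      rw [map_sub, map_sub, ContinuousLinearMap.sub_apply]
    have e2 : ⟪i (p' - pbar), i q⟫ = ⟪i p', i q⟫ - ⟪i pbar, i q⟫ := by
      rw [map_sub, inner_sub_left]
    have e3 : K q (m' - mbar) = K q m' - K q mbar := map_sub (K q) m' mbar
    have e4 : Bstar (lam' - lam) q = Bstar lam' q - Bstar lam q := by
      rw [map_sub, ContinuousLinearMap.sub_apply]
    rw [e1, e2, e3, e4]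
    linear_combination h1 - h2'
  have hq := heqd (p' - pbar)
  have hB0 : Bstar (lam' - lam) (p' - pbar) = 0 := by
    rw [hBstar]
    have h4 : B (p' - pbar) = 0 := hdp
    rw [h4]
    rfl
  have hDd : D (m' - mbar) (m' - mbar) = -(K (p' - pbar) (m' - mbar)) := by
    have h5 := congrArg (fun f => f (m' - mbar)) hKdd
    simp only [ContinuousLinearMap.add_apply, ContinuousLinearMap.zero_apply] at h5
    linarith
  have hA0 := hApos (i (p' - pbar))
  have hD0 := hD (m' - mbar)
  have hm0 : m' - mbar = 0 := by
    have h5 : c_D * ‖m' - mbar‖ ^ 2 ≤ -(K (p' - pbar) (m' - mbar)) := hD0.trans_eq hDd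
    have h6 : -(K (p' - pbar) (m' - mbar)) ≤ 0 := by linarith
    exact norm_eq_zero.mp (auxZeroSq hc_D (h5.trans h6) (norm_nonneg _))
  have hp0 : p' - pbar = 0 := by
    have h5 : K (p' - pbar) = 0 := by
      have h6 := hKdd
      rw [hm0, map_zero, add_zero] at h6
      exact h6
    have h7 := hK (p' - pbar) hdp
    rw [h5, norm_zero] at h7
    exact norm_eq_zero.mp (auxZero2 hc_K h7 (norm_nonneg _))
  have hl0 : lam' - lam = 0 := by
    have h1 : ∀ q : P, Bstar (lam' - lam) q = 0 := by
      intro q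
      have h5 := heqd q
      rw [hp0, hm0] at h5
      simpa using h5
    have h2' : Ba (lam' - lam) = 0 := by
      have h3 : ⟪Ba (lam' - lam), Ba (lam' - lam)⟫ = 0 := by
        rw [hBaInner, ← hBstar]
        exact h1 _
      exact inner_self_eq_zero.mp h3
    have h4 := hBalow (lam' - lam)
    rw [h2', norm_zero] at h4
    exact norm_eq_zero.mp (auxZero2 hβ h4 (norm_nonneg _))
  exact ⟨sub_eq_zero.mp hp0, sub_eq_zero.mp hm0, sub_eq_zero.mp hl0⟩
end

section
/- Under Assumption 2.1 and with A non-negative (⟨A h, h⟩ ≥ 0 for h ∈ H), for any γ > 0 the block operator A_γ = [[−γA, K*], [−K, −D/γ]] on H_ker × M (with H_ker the closure of P_ker in H) is dissipative: for every (p, m) in its domain D(A_γ) = P_ker × {m ∈ M : ∃ h ∈ H_ker with (h, q)_H = ⟨K* m, q⟩ for all q ∈ P_ker}, one has Re ⟨A_γ(p,m), (p,m)⟩_{H_ker × M} ≤ 0. -/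
open scoped RealInnerProductSpace

/-- Dissipativity of the block operator
`A_γ = [[−γA, K*], [−K, −D/γ]]` on `H_ker × M`: for `(p, m)` in its domain
(i.e. `p ∈ P_ker` and `K* m` has a representative `h ∈ H_ker`),
`⟨A_γ(p,m), (p,m)⟩ = −γ⟨A p, p⟩ + (h, p)_H − ⟨K p, m⟩ − ⟨D m, m⟩/γ ≤ 0`. -/
theorem stmt7
    {P Hk M : Type*} [NormedAddCommGroup P] [InnerProductSpace ℝ P] [CompleteSpace P]
    [NormedAddCommGroup Hk] [InnerProductSpace ℝ Hk] [CompleteSpace Hk]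
    [NormedAddCommGroup M] [InnerProductSpace ℝ M] [CompleteSpace M]
    -- dense continuous embedding of P_ker into H_ker
    (i : P →L[ℝ] Hk) (hi : Function.Injective i) (hdense : DenseRange i)
    -- A : H → H* bounded and non-negative
    (A : Hk →L[ℝ] StrongDual ℝ Hk) (hA : ∀ h : Hk, 0 ≤ A h h)
    (K : P →L[ℝ] StrongDual ℝ M)
    (D : M →L[ℝ] StrongDual ℝ M)
    (c_D : ℝ) (hc_D : 0 < c_D) (hD : ∀ m : M, c_D * ‖m‖ ^ 2 ≤ D m m)
    (γ : ℝ) (hγ : 0 < γ) :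
    ∀ (p : P) (m : M) (h : Hk),
      (∀ q : P, ⟪h, i q⟫ = K q m) →
      (-γ * A (i p) (i p) + ⟪h, i p⟫) + (-(K p m) - D m m / γ) ≤ 0 := by
  intro p m h hrep
  have h1 : ⟪h, i p⟫ = K p m := hrep p
  have h2 : 0 ≤ A (i p) (i p) := hA (i p)
  have h3 : 0 ≤ D m m := le_trans (by positivity) (hD m)
  rw [h1]
  have : 0 ≤ γ * A (i p) (i p) + D m m / γ := by positivity
  linarith
end

section
/- Under Assumption 2.1, the domain D(A_γ) = P_ker × {m ∈ M : K* m has a representative in H_ker} of the block operator A_γ is dense in H_ker × M. -/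
open scoped RealInnerProductSpace

/-- The domain `D(A_γ) = P_ker × {m ∈ M : K* m has a representative in H_ker}`
of the block operator `A_γ` is dense in `H_ker × M`. -/
theorem stmt8
    {P Hk M : Type*} [NormedAddCommGroup P] [InnerProductSpace ℝ P] [CompleteSpace P]
    [NormedAddCommGroup Hk] [InnerProductSpace ℝ Hk] [CompleteSpace Hk]
    [NormedAddCommGroup M] [InnerProductSpace ℝ M] [CompleteSpace M]
    -- dense continuous embedding of P_ker into H_ker (Gelfand triple)
    (i : P →L[ℝ] Hk) (hi : Function.Injective i) (hdense : DenseRange i)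
    -- Assumption 2.1 (restricted to the kernel)
    (A : Hk →L[ℝ] StrongDual ℝ Hk)
    (K : P →L[ℝ] StrongDual ℝ M)
    (D : M →L[ℝ] StrongDual ℝ M)
    (c_D : ℝ) (hc_D : 0 < c_D) (hD : ∀ m : M, c_D * ‖m‖ ^ 2 ≤ D m m)
    (c_K : ℝ) (hc_K : 0 < c_K) (hK : ∀ q : P, c_K * ‖q‖ ≤ ‖K q‖) :
    Dense {x : Hk × M |
      x.1 ∈ Set.range i ∧ ∃ h : Hk, ∀ q : P, ⟪h, i q⟫ = K q x.2} := by
  classical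
  set S : Set M := {m : M | ∃ h : Hk, ∀ q : P, ⟪h, i q⟫ = K q m} with hSdef
  -- The adjoint of `i`
  set T : Hk →L[ℝ] P := ContinuousLinearMap.adjoint i with hTdef
  -- `K` is injective
  have hKinj : Function.Injective K := by
    intro a b hab
    have h1 : c_K * ‖a - b‖ ≤ ‖K (a - b)‖ := hK _
    rw [map_sub, hab, sub_self, norm_zero] at h1
    have h2 : ‖a - b‖ ≤ 0 := by
      by_contra hlt
      push_neg at hlt
      nlinarith
    exact sub_eq_zero.mp (norm_le_zero_iff.mp h2)
  -- `K.flip : M →L Dual P` is surjective (Hahn-Banach + boundedness below of `K`)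
  have hKbsurj : Function.Surjective (K.flip : M →L[ℝ] StrongDual ℝ P) := by
    intro f
    set R : Submodule ℝ (StrongDual ℝ M) := LinearMap.range (K : P →ₗ[ℝ] StrongDual ℝ M) with hRdef
    set e : P ≃ₗ[ℝ] R := LinearEquiv.ofInjective (K : P →ₗ[ℝ] StrongDual ℝ M) hKinj with hedef
    set g0 : R →ₗ[ℝ] ℝ := (f : P →ₗ[ℝ] ℝ).comp e.symm.toLinearMap with hg0def
    have hb : ∀ y : R, ‖g0 y‖ ≤ (‖f‖ / c_K) * ‖y‖ := by
      intro y
      obtain ⟨q, hq⟩ := y.2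
      have hey : e q = y := Subtype.ext hq
      have hsymm : e.symm y = q := by rw [← hey, LinearEquiv.symm_apply_apply]
      have h1 : ‖g0 y‖ = ‖f q‖ := by simp [hg0def, hsymm]
      have h2 : ‖f q‖ ≤ ‖f‖ * ‖q‖ := f.le_opNorm q
      have h3 : c_K * ‖q‖ ≤ ‖(y : StrongDual ℝ M)‖ := by
        rw [← hq]; exact hK q
      have hy : ‖y‖ = ‖(y : StrongDual ℝ M)‖ := rfl
      rw [h1, hy, div_mul_eq_mul_div, le_div_iff₀ hc_K]
      calc ‖f q‖ * c_K ≤ (‖f‖ * ‖q‖) * c_K :=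
            mul_le_mul_of_nonneg_right h2 hc_K.le
        _ = ‖f‖ * (c_K * ‖q‖) := by ring
        _ ≤ ‖f‖ * ‖(y : StrongDual ℝ M)‖ :=
            mul_le_mul_of_nonneg_left h3 (norm_nonneg f)
    set g : R →L[ℝ] ℝ := LinearMap.mkContinuous g0 (‖f‖ / c_K) (fun y => hb y) with hgdef
    obtain ⟨G, hG, -⟩ := exists_extension_norm_eq R g
    -- build `m` from `G` via Riesz representation
    set ψlin : M →ₗ[ℝ] ℝ :=
      { toFun := fun x => G (InnerProductSpace.toDual ℝ M x)
        map_add' := by intro x y; simp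
        map_smul' := by intro c x; simp } with hψdef
    have hψb : ∀ x : M, ‖ψlin x‖ ≤ ‖G‖ * ‖x‖ := by
      intro x
      calc ‖ψlin x‖ = ‖G (InnerProductSpace.toDual ℝ M x)‖ := rfl
        _ ≤ ‖G‖ * ‖InnerProductSpace.toDual ℝ M x‖ := G.le_opNorm _
        _ = ‖G‖ * ‖x‖ := by rw [LinearIsometryEquiv.norm_map]
    set ψ : StrongDual ℝ M := LinearMap.mkContinuous ψlin ‖G‖ hψb with hψ'def
    refine ⟨(InnerProductSpace.toDual ℝ M).symm ψ, ?_⟩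
    ext q
    have hmem : K q ∈ R := ⟨q, rfl⟩
    have hGK : G (K q) = f q := by
      have := hG ⟨K q, hmem⟩
      have heq : e.symm ⟨K q, hmem⟩ = q := by
        have : e q = ⟨K q, hmem⟩ := Subtype.ext rfl
        rw [← this, LinearEquiv.symm_apply_apply]
      simpa [hgdef, hg0def, heq] using this
    have step1 : K q ((InnerProductSpace.toDual ℝ M).symm ψ) =
        ⟪(InnerProductSpace.toDual ℝ M).symm (K q), (InnerProductSpace.toDual ℝ M).symm ψ⟫ :=
      (InnerProductSpace.toDual_symm_apply).symm
    have step2 : ⟪(InnerProductSpace.toDual ℝ M).symm ψ, (InnerProductSpace.toDual ℝ M).symm (K q)⟫ =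
        ψ ((InnerProductSpace.toDual ℝ M).symm (K q)) := InnerProductSpace.toDual_symm_apply
    have step3 : ψ ((InnerProductSpace.toDual ℝ M).symm (K q)) = G (K q) := by
      show G (InnerProductSpace.toDual ℝ M ((InnerProductSpace.toDual ℝ M).symm (K q))) = G (K q)
      rw [LinearIsometryEquiv.apply_symm_apply]
    show K q ((InnerProductSpace.toDual ℝ M).symm ψ) = f q
    rw [step1, real_inner_comm, step2, step3, hGK]
  have hopen : IsOpenMap (K.flip : M →L[ℝ] StrongDual ℝ P) :=
    ContinuousLinearMap.isOpenMap _ hKbsurj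
  -- the range of `T` is dense in `P`
  have hTd : Dense ((LinearMap.range (T : Hk →ₗ[ℝ] P) : Submodule ℝ P) : Set P) := by
    rw [Submodule.dense_iff_topologicalClosure_eq_top,
      Submodule.topologicalClosure_eq_top_iff]
    rw [Submodule.eq_bot_iff]
    intro x hx
    have hx' : ∀ h : Hk, ⟪h, i x⟫ = 0 := by
      intro h
      have := hx (T h) (LinearMap.mem_range_self _ h)
      rwa [ContinuousLinearMap.adjoint_inner_left] at this
    have hix : i x = 0 := by
      have := hx' (i x)
      exact inner_self_eq_zero.mp this
    exact hi (by simpa using hix)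
  -- its image under `toDual` is dense in `Dual P`
  set Dset : Set (StrongDual ℝ P) :=
    (InnerProductSpace.toDual ℝ P) '' ((LinearMap.range (T : Hk →ₗ[ℝ] P) : Submodule ℝ P) : Set P) with hDsetdef
  have hDd : Dense Dset := by
    have hsurj : DenseRange (InnerProductSpace.toDual ℝ P) :=
      (InnerProductSpace.toDual ℝ P).surjective.denseRange
    exact hsurj.dense_image (InnerProductSpace.toDual ℝ P).continuous hTd
  -- `S` is the preimage of `Dset` under `K.flip`
  have hSeq : S = (K.flip : M →L[ℝ] StrongDual ℝ P) ⁻¹' Dset := by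
    ext m
    constructor
    · rintro ⟨h, hh⟩
      refine ⟨T h, LinearMap.mem_range_self _ h, ?_⟩
      ext q
      rw [InnerProductSpace.toDual_apply_apply, hTdef, ContinuousLinearMap.adjoint_inner_left]
      exact hh q
    · rintro ⟨p, ⟨h, rfl⟩, heq⟩
      refine ⟨h, fun q => ?_⟩
      have := congrFun (congrArg (fun (φ : StrongDual ℝ P) => (φ : P → ℝ)) heq) q
      simpa [InnerProductSpace.toDual_apply_apply, hTdef,
        ContinuousLinearMap.adjoint_inner_left] using this
  -- hence `S` is dense
  have hSdense : Dense S := by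
    rw [hSeq, dense_iff_inter_open]
    intro U hU hUne
    obtain ⟨m0, hm0⟩ := hUne
    have hne : ((K.flip : M →L[ℝ] StrongDual ℝ P) '' U).Nonempty := ⟨_, ⟨m0, hm0, rfl⟩⟩
    obtain ⟨y, hyU, hyD⟩ := hDd.inter_open_nonempty _ (hopen U hU) hne
    obtain ⟨u, huU, rfl⟩ := hyU
    exact ⟨u, huU, hyD⟩
  -- conclude: the product of two dense sets is dense
  have hsub : (Set.range i) ×ˢ S ⊆ {x : Hk × M |
      x.1 ∈ Set.range i ∧ ∃ h : Hk, ∀ q : P, ⟪h, i q⟫ = K q x.2} :=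
    fun x hx => ⟨hx.1, hx.2⟩
  exact (hdense.prod hSdense).mono hsub
end

section
/- Let (p, m) and (p₀, m₀) solve, on the kernel space P_ker, the coupled system d/dt(p − p₀) + A(p − p₀) − K*(m − m₀) = 0 in P_ker* and K(p − p₀) + D(m − m₀) = −ε ṁ in M*, with (p − p₀)(0) = 0, where A : H → H* is bounded with norm C_A and D is elliptic with constant c_D. Then for all t ∈ [0, T]: ‖(p − p₀)(t)‖²_H + c_D ∫₀ᵗ ‖(m − m₀)(s)‖²_M ds ≤ (ε²/c_D) e^{2 C_A t} ∫₀ᵗ ‖ṁ(s)‖²_M ds. -/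
open scoped RealInnerProductSpace

set_option maxHeartbeats 2000000 in
/-- First-order approximation I (energy estimate): if `e = p − p₀` and `w = m − m₀`
solve `d/dt e + A e − K* w = 0` in `P_ker*`, `K e + D w = −ε ṁ` in `M*`, with
`e(0) = 0`, then `‖e(t)‖²_H + c_D ∫₀ᵗ ‖w‖²_M ≤ (ε²/c_D) e^{2C_A t} ∫₀ᵗ ‖ṁ‖²_M`. -/
theorem stmt11
    {P H M : Type*} [NormedAddCommGroup P] [InnerProductSpace ℝ P] [CompleteSpace P]
    [NormedAddCommGroup H] [InnerProductSpace ℝ H] [CompleteSpace H]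
    [NormedAddCommGroup M] [InnerProductSpace ℝ M] [CompleteSpace M]
    -- continuous embedding of P_ker into the pivot space H
    (i : P →L[ℝ] H) (hi : Function.Injective i) (hdense : DenseRange i)
    (A : H →L[ℝ] StrongDual ℝ H) (C_A : ℝ) (hC_A : 0 ≤ C_A)
    (hA : ∀ h h' : H, |A h h'| ≤ C_A * ‖h‖ * ‖h'‖)
    (K : P →L[ℝ] StrongDual ℝ M)
    (D : M →L[ℝ] StrongDual ℝ M)
    (c_D : ℝ) (hc_D : 0 < c_D) (hD : ∀ m : M, c_D * ‖m‖ ^ 2 ≤ D m m)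
    (ε T : ℝ) (hε : 0 < ε) (hT : 0 ≤ T)
    (e : ℝ → P) (w mdot : ℝ → M)
    (hcont_e : Continuous e) (hcont_w : Continuous w) (hcont_m : Continuous mdot)
    -- d/dt (p − p₀) + A (p − p₀) − K*(m − m₀) = 0 in P_ker* (weak form)
    (heq1 : ∀ t ∈ Set.Icc (0 : ℝ) T, ∀ q : P,
      HasDerivAt (fun s => ⟪i (e s), i q⟫) (-(A (i (e t)) (i q)) + K q (w t)) t)
    -- K (p − p₀) + D (m − m₀) = −ε ṁ in M*
    (heq2 : ∀ t ∈ Set.Icc (0 : ℝ) T, ∀ n : M,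
      K (e t) n + D (w t) n = -ε * ⟪mdot t, n⟫)
    (h0 : e 0 = 0) :
    ∀ t ∈ Set.Icc (0 : ℝ) T,
      ‖i (e t)‖ ^ 2 + c_D * (∫ s in (0:ℝ)..t, ‖w s‖ ^ 2) ≤
        ε ^ 2 / c_D * Real.exp (2 * C_A * t) * (∫ s in (0:ℝ)..t, ‖mdot s‖ ^ 2) := by
  classical
  -- continuity facts
  have hie : Continuous fun s => i (e s) := i.continuous.comp hcont_e
  have hcont_f : Continuous fun s => ‖i (e s)‖ ^ 2 := (hie.norm.pow 2)
  have hcontA : Continuous fun s => A (i (e s)) (i (e s)) :=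
    (isBoundedBilinearMap_apply (𝕜 := ℝ)).continuous.comp
      ((A.continuous.comp hie).prodMk hie)
  have hcontK : Continuous fun s => K (e s) (w s) :=
    (isBoundedBilinearMap_apply (𝕜 := ℝ)).continuous.comp
      ((K.continuous.comp hcont_e).prodMk hcont_w)
  set f : ℝ → ℝ := fun s => ‖i (e s)‖ ^ 2 with hf_def
  set d : ℝ → ℝ := fun s => -(A (i (e s)) (i (e s))) + K (e s) (w s) with hd_def
  have hcont_d : Continuous d := hcontA.neg.add hcontK
  -- uniform bounds on the compact interval
  obtain ⟨M₁, hM₁⟩ := (isCompact_Icc : IsCompact (Set.Icc (0:ℝ) T)).exists_bound_of_continuousOn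
    hie.continuousOn
  obtain ⟨M₂, hM₂⟩ := (isCompact_Icc : IsCompact (Set.Icc (0:ℝ) T)).exists_bound_of_continuousOn
    hcont_w.continuousOn
  have h0T : (0:ℝ) ∈ Set.Icc (0:ℝ) T := ⟨le_refl _, hT⟩
  have hM₁0 : 0 ≤ M₁ := le_trans (norm_nonneg _) (hM₁ 0 h0T)
  have hM₂0 : 0 ≤ M₂ := le_trans (norm_nonneg _) (hM₂ 0 h0T)
  -- L1 : Lipschitz estimate for pairings against a fixed q
  have L1 : ∀ q : P, ∀ s ∈ Set.Icc (0:ℝ) T, ∀ u ∈ Set.Icc (0:ℝ) T,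
      |(⟪i (e u), i q⟫ : ℝ) - ⟪i (e s), i q⟫| ≤
        (C_A * M₁ * ‖i q‖ + ‖K q‖ * M₂) * |u - s| := by
    intro q s hs u hu
    have hderiv : ∀ σ ∈ Set.Icc (0:ℝ) T,
        HasDerivWithinAt (fun s => (⟪i (e s), i q⟫ : ℝ))
          (-(A (i (e σ)) (i q)) + K q (w σ)) (Set.Icc 0 T) σ :=
      fun σ hσ => (heq1 σ hσ q).hasDerivWithinAt
    have hbound : ∀ σ ∈ Set.Icc (0:ℝ) T,
        ‖-(A (i (e σ)) (i q)) + K q (w σ)‖ ≤ C_A * M₁ * ‖i q‖ + ‖K q‖ * M₂ := by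
      intro σ hσ
      have h1 : |A (i (e σ)) (i q)| ≤ C_A * M₁ * ‖i q‖ := by
        refine (hA _ _).trans ?_
        exact mul_le_mul_of_nonneg_right
          (mul_le_mul_of_nonneg_left (hM₁ σ hσ) hC_A) (norm_nonneg _)
      have h2 : |K q (w σ)| ≤ ‖K q‖ * M₂ := by
        have h1 := (K q).le_opNorm (w σ)
        have h2 : ‖K q‖ * ‖w σ‖ ≤ ‖K q‖ * M₂ :=
          mul_le_mul_of_nonneg_left (hM₂ σ hσ) (norm_nonneg _)
        calc |K q (w σ)| = ‖K q (w σ)‖ := (Real.norm_eq_abs _).symm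
          _ ≤ ‖K q‖ * ‖w σ‖ := h1
          _ ≤ ‖K q‖ * M₂ := h2
      calc ‖-(A (i (e σ)) (i q)) + K q (w σ)‖
          ≤ ‖-(A (i (e σ)) (i q))‖ + ‖K q (w σ)‖ := norm_add_le _ _
        _ ≤ C_A * M₁ * ‖i q‖ + ‖K q‖ * M₂ := by
            rw [norm_neg, Real.norm_eq_abs, Real.norm_eq_abs]; exact add_le_add h1 h2
    have hmvt := Convex.norm_image_sub_le_of_norm_hasDerivWithin_le hderiv hbound
      (convex_Icc 0 T) hs hu
    simpa [Real.norm_eq_abs] using hmvt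
  -- L2 : derivative of the squared norm in the interior
  have L2 : ∀ u ∈ Set.Ioo (0:ℝ) T, HasDerivAt f (2 * d u) u := by
    intro u hu
    have huI : u ∈ Set.Icc (0:ℝ) T := Set.Ioo_subset_Icc_self hu
    have hmain : HasDerivAt (fun s => 2 * (⟪i (e s), i (e u)⟫ : ℝ) - f u)
        (2 * d u) u := by
      have h := ((heq1 u huI (e u)).const_mul 2).sub_const (f u)
      simpa [hd_def] using h
    have hrem : HasDerivAt (fun s => ‖i (e s) - i (e u)‖ ^ 2) 0 u := by
      rw [hasDerivAt_iff_tendsto]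
      have hIcc : Set.Icc (0:ℝ) T ∈ nhds u := Icc_mem_nhds hu.1 hu.2
      apply squeeze_zero' (g := fun s => (C_A * M₁ * ‖i‖ + ‖K‖ * M₂) * ‖e s - e u‖)
      · filter_upwards with s
        positivity
      · filter_upwards [hIcc] with s hsI
        have hq : i (e s) - i (e u) = i (e s - e u) := (map_sub i _ _).symm
        have key : ‖i (e s) - i (e u)‖ ^ 2 =
            (⟪i (e s), i (e s - e u)⟫ : ℝ) - ⟪i (e u), i (e s - e u)⟫ := by
          rw [← inner_sub_left, ← hq, real_inner_self_eq_norm_sq]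
        have hb := L1 (e s - e u) u huI s hsI
        have hb2 : C_A * M₁ * ‖i (e s - e u)‖ + ‖K (e s - e u)‖ * M₂ ≤
            (C_A * M₁ * ‖i‖ + ‖K‖ * M₂) * ‖e s - e u‖ := by
          have h1 : C_A * M₁ * ‖i (e s - e u)‖ ≤ C_A * M₁ * (‖i‖ * ‖e s - e u‖) :=
            mul_le_mul_of_nonneg_left (i.le_opNorm _) (mul_nonneg hC_A hM₁0)
          have h2 : ‖K (e s - e u)‖ * M₂ ≤ ‖K‖ * ‖e s - e u‖ * M₂ :=
            mul_le_mul_of_nonneg_right (K.le_opNorm _) hM₂0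
          linarith
        have hr : |‖i (e s) - i (e u)‖ ^ 2| ≤
            ((C_A * M₁ * ‖i‖ + ‖K‖ * M₂) * ‖e s - e u‖) * |s - u| := by
          rw [key]
          exact hb.trans (by
            have : (0:ℝ) ≤ |s - u| := abs_nonneg _
            nlinarith [hb2])
        have hz : ‖i (e s) - i (e u)‖ ^ 2 - ‖i (e u) - i (e u)‖ ^ 2 - (s - u) • (0:ℝ)
            = ‖i (e s) - i (e u)‖ ^ 2 := by simp
        rw [hz, Real.norm_eq_abs, Real.norm_eq_abs,
          abs_of_nonneg (by positivity : (0:ℝ) ≤ ‖i (e s) - i (e u)‖ ^ 2)]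
        rcases eq_or_ne s u with rfl | hsu
        · simp
        · have hpos : (0:ℝ) < |s - u| := abs_pos.2 (sub_ne_zero.2 hsu)
          rw [inv_mul_le_iff₀ hpos]
          have hr' : ‖i (e s) - i (e u)‖ ^ 2 ≤
              ((C_A * M₁ * ‖i‖ + ‖K‖ * M₂) * ‖e s - e u‖) * |s - u| :=
            (le_abs_self _).trans hr
          nlinarith [hr']
      · have : Filter.Tendsto (fun s => (C_A * M₁ * ‖i‖ + ‖K‖ * M₂) * ‖e s - e u‖)
            (nhds u) (nhds ((C_A * M₁ * ‖i‖ + ‖K‖ * M₂) * ‖e u - e u‖)) :=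
          (continuous_const.mul ((hcont_e.sub continuous_const).norm)).tendsto u
        simpa using this
    have hfun : f = fun s => (2 * (⟪i (e s), i (e u)⟫ : ℝ) - f u)
        + ‖i (e s) - i (e u)‖ ^ 2 := by
      funext s
      have h := norm_sub_sq_real (i (e s)) (i (e u))
      simp only [hf_def]
      linarith
    rw [hfun]
    exact (hmain.add hrem).congr_deriv (add_zero _)
  -- L3 : pointwise differential inequality
  have L3 : ∀ s ∈ Set.Icc (0:ℝ) T,
      2 * d s + c_D * ‖w s‖ ^ 2 ≤ 2 * C_A * f s + ε ^ 2 / c_D * ‖mdot s‖ ^ 2 := by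
    intro s hs
    have h2 := heq2 s hs (w s)
    have hAb : -(A (i (e s)) (i (e s))) ≤ C_A * f s := by
      have h := hA (i (e s)) (i (e s))
      have h' := neg_abs_le (A (i (e s)) (i (e s)))
      simp only [hf_def]
      nlinarith
    have hDb := hD (w s)
    have hip : |(⟪mdot s, w s⟫ : ℝ)| ≤ ‖mdot s‖ * ‖w s‖ := abs_real_inner_le_norm _ _
    have hKs : K (e s) (w s) = -ε * ⟪mdot s, w s⟫ - D (w s) (w s) := by linarith
    have e1 : ε ^ 2 / c_D * ‖mdot s‖ ^ 2 * c_D = ε ^ 2 * ‖mdot s‖ ^ 2 := by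
      field_simp
    have key : 2 * (ε * (‖mdot s‖ * ‖w s‖)) ≤
        c_D * ‖w s‖ ^ 2 + ε ^ 2 / c_D * ‖mdot s‖ ^ 2 := by
      rw [show ε ^ 2 / c_D * ‖mdot s‖ ^ 2 = ε ^ 2 * ‖mdot s‖ ^ 2 / c_D from by ring,
        ← sub_le_iff_le_add', le_div_iff₀ hc_D]
      nlinarith [sq_nonneg (c_D * ‖w s‖ - ε * ‖mdot s‖)]
    have hipε : -ε * (⟪mdot s, w s⟫ : ℝ) ≤ ε * (‖mdot s‖ * ‖w s‖) := by
      nlinarith [neg_abs_le (⟪mdot s, w s⟫ : ℝ), abs_nonneg (⟪mdot s, w s⟫ : ℝ)]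
    simp only [hd_def]
    linarith [hAb, hDb, hipε, key, hKs]
  -- main argument
  intro t ht
  obtain ⟨ht0, htT⟩ := ht
  set F : ℝ → ℝ := fun s => ∫ u in (0:ℝ)..s, ‖w u‖ ^ 2 with hF_def
  have hw2 : Continuous fun u => ‖w u‖ ^ 2 := hcont_w.norm.pow 2
  have hF : ∀ s : ℝ, HasDerivAt F (‖w s‖ ^ 2) s := fun s =>
    intervalIntegral.integral_hasDerivAt_right (hw2.intervalIntegrable 0 s)
      (hw2.stronglyMeasurableAtFilter _ _) hw2.continuousAt
  have hcont_F : Continuous F := continuous_iff_continuousAt.2 fun s => (hF s).continuousAt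
  set φ : ℝ → ℝ := fun s => f s + c_D * F s with hφ_def
  have hcont_φ : Continuous φ := hcont_f.add (continuous_const.mul hcont_F)
  set g : ℝ → ℝ := fun s =>
    Real.exp (-(2 * C_A) * s) * (2 * d s + c_D * ‖w s‖ ^ 2 - 2 * C_A * φ s) with hg_def
  have hcont_g : Continuous g := by
    apply Continuous.mul
    · exact Real.continuous_exp.comp (continuous_const.mul continuous_id)
    · exact ((continuous_const.mul hcont_d).add (continuous_const.mul hw2)).sub
        (continuous_const.mul hcont_φ)
  have hψd : ∀ u ∈ Set.Ioo (0:ℝ) t,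
      HasDerivAt (fun s => Real.exp (-(2 * C_A) * s) * φ s) (g u) u := by
    intro u hu
    have huT : u ∈ Set.Ioo (0:ℝ) T := ⟨hu.1, lt_of_lt_of_le hu.2 htT⟩
    have hφ' : HasDerivAt φ (2 * d u + c_D * ‖w u‖ ^ 2) u :=
      (L2 u huT).add ((hF u).const_mul c_D)
    have hlin : HasDerivAt (fun s : ℝ => -(2 * C_A) * s) (-(2 * C_A)) u := by
      simpa using (hasDerivAt_id u).const_mul (-(2 * C_A))
    have hexp := hlin.exp
    have h := hexp.mul hφ'
    refine h.congr_deriv ?_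
    simp only [hg_def]
    ring
  have hψcont : Continuous fun s => Real.exp (-(2 * C_A) * s) * φ s :=
    (Real.continuous_exp.comp (continuous_const.mul continuous_id)).mul hcont_φ
  have hint : ∫ y in (0:ℝ)..t, g y =
      Real.exp (-(2 * C_A) * t) * φ t - Real.exp (-(2 * C_A) * 0) * φ 0 :=
    intervalIntegral.integral_eq_sub_of_hasDeriv_right_of_le ht0
      hψcont.continuousOn (fun u hu => (hψd u hu).hasDerivWithinAt)
      (hcont_g.intervalIntegrable 0 t)
  have hφ0 : φ 0 = 0 := by
    simp [hφ_def, hF_def, hf_def, h0]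
  have hg_le : ∀ s ∈ Set.Icc (0:ℝ) t, g s ≤ ε ^ 2 / c_D * ‖mdot s‖ ^ 2 := by
    intro s hs
    have hsT : s ∈ Set.Icc (0:ℝ) T := ⟨hs.1, hs.2.trans htT⟩
    have hFs : 0 ≤ F s :=
      intervalIntegral.integral_nonneg hs.1 (fun u _ => by positivity)
    have hfφ : f s ≤ φ s := by
      simp only [hφ_def]
      linarith [mul_nonneg hc_D.le hFs]
    have hX : 2 * d s + c_D * ‖w s‖ ^ 2 - 2 * C_A * φ s ≤
        ε ^ 2 / c_D * ‖mdot s‖ ^ 2 := by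
      have h := L3 s hsT
      have hcomb : 2 * C_A * f s ≤ 2 * C_A * φ s :=
        mul_le_mul_of_nonneg_left hfφ (by positivity)
      clear_value f d F φ g
      linarith [h, hcomb]
    have ha1 : Real.exp (-(2 * C_A) * s) ≤ 1 :=
      Real.exp_le_one_iff.2 (by nlinarith [hs.1])
    have ha0 : (0:ℝ) < Real.exp (-(2 * C_A) * s) := Real.exp_pos _
    have hY : 0 ≤ ε ^ 2 / c_D * ‖mdot s‖ ^ 2 := by positivity
    calc g s ≤ Real.exp (-(2 * C_A) * s) * (ε ^ 2 / c_D * ‖mdot s‖ ^ 2) := by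
          simp only [hg_def]
          exact mul_le_mul_of_nonneg_left hX ha0.le
      _ ≤ ε ^ 2 / c_D * ‖mdot s‖ ^ 2 := by nlinarith
  have hmono : ∫ y in (0:ℝ)..t, g y ≤
      ∫ s in (0:ℝ)..t, ε ^ 2 / c_D * ‖mdot s‖ ^ 2 :=
    intervalIntegral.integral_mono_on ht0 (hcont_g.intervalIntegrable 0 t)
      ((continuous_const.mul (hcont_m.norm.pow 2)).intervalIntegrable 0 t) hg_le
  have hpull : ∫ s in (0:ℝ)..t, ε ^ 2 / c_D * ‖mdot s‖ ^ 2 =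
      ε ^ 2 / c_D * ∫ s in (0:ℝ)..t, ‖mdot s‖ ^ 2 :=
    intervalIntegral.integral_const_mul _ _
  have h1 : Real.exp (-(2 * C_A) * t) * φ t ≤
      ε ^ 2 / c_D * ∫ s in (0:ℝ)..t, ‖mdot s‖ ^ 2 := by
    have := hint
    rw [hφ0] at this
    simp only [mul_zero, sub_zero] at this
    rw [← this, ← hpull]
    exact hmono
  have hsum : 2 * C_A * t + -(2 * C_A) * t = 0 := by ring
  have hfinal : φ t ≤ ε ^ 2 / c_D * Real.exp (2 * C_A * t) *
      ∫ s in (0:ℝ)..t, ‖mdot s‖ ^ 2 := by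
    calc φ t = Real.exp (2 * C_A * t) * (Real.exp (-(2 * C_A) * t) * φ t) := by
          rw [← mul_assoc, ← Real.exp_add, hsum, Real.exp_zero, one_mul]
      _ ≤ Real.exp (2 * C_A * t) * (ε ^ 2 / c_D * ∫ s in (0:ℝ)..t, ‖mdot s‖ ^ 2) :=
          mul_le_mul_of_nonneg_left h1 (Real.exp_pos _).le
      _ = ε ^ 2 / c_D * Real.exp (2 * C_A * t) * ∫ s in (0:ℝ)..t, ‖mdot s‖ ^ 2 := by
          ring
  exact hfinal
end

section
/- In the setting of the previous estimate, testing additionally with (D⁻¹)* K (p − p₀) yields: ‖(p − p₀)(t)‖²_H + c_L ∫₀ᵗ ‖(p − p₀)(s)‖²_P ds ≤ ε² (C_K² / (c_L c_D²)) e^{2 C_A t} ∫₀ᵗ ‖ṁ(s)‖²_M ds, where c_L is the ellipticity constant of L = K* D⁻¹ K on P_ker and C_K = ‖K‖. -/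
set_option maxHeartbeats 1000000


open scoped RealInnerProductSpace

/-- First-order approximation, P-norm version: testing with `(D⁻¹)* K (p − p₀)` yields
`‖e(t)‖²_H + c_L ∫₀ᵗ ‖e‖²_P ≤ ε² (C_K²/(c_L c_D²)) e^{2C_A t} ∫₀ᵗ ‖ṁ‖²_M`. -/
theorem stmt12
    {P H M : Type*} [NormedAddCommGroup P] [InnerProductSpace ℝ P] [CompleteSpace P]
    [NormedAddCommGroup H] [InnerProductSpace ℝ H] [CompleteSpace H]
    [NormedAddCommGroup M] [InnerProductSpace ℝ M] [CompleteSpace M]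
    (i : P →L[ℝ] H) (hi : Function.Injective i) (hdense : DenseRange i)
    (A : H →L[ℝ] StrongDual ℝ H) (C_A : ℝ) (hC_A : 0 ≤ C_A)
    (hA : ∀ h h' : H, |A h h'| ≤ C_A * ‖h‖ * ‖h'‖)
    (K : P →L[ℝ] StrongDual ℝ M) (C_K : ℝ) (hC_K : 0 < C_K)
    (hKbd : ∀ q : P, ‖K q‖ ≤ C_K * ‖q‖)
    (D : M →L[ℝ] StrongDual ℝ M)
    (c_D : ℝ) (hc_D : 0 < c_D) (hD : ∀ m : M, c_D * ‖m‖ ^ 2 ≤ D m m)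
    (Dinv : StrongDual ℝ M →L[ℝ] M)
    (hDinv₁ : ∀ f : StrongDual ℝ M, D (Dinv f) = f)
    (hDinv₂ : ∀ m : M, Dinv (D m) = m)
    -- ellipticity of L = K* D⁻¹ K on P_ker with constant c_L
    (c_L : ℝ) (hc_L : 0 < c_L)
    (hL : ∀ q : P, c_L * ‖q‖ ^ 2 ≤ K q (Dinv (K q)))
    (ε T : ℝ) (hε : 0 < ε) (hT : 0 ≤ T)
    (e : ℝ → P) (w mdot : ℝ → M)
    (hcont_e : Continuous e) (hcont_w : Continuous w) (hcont_m : Continuous mdot)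
    (heq1 : ∀ t ∈ Set.Icc (0 : ℝ) T, ∀ q : P,
      HasDerivAt (fun s => ⟪i (e s), i q⟫) (-(A (i (e t)) (i q)) + K q (w t)) t)
    (heq2 : ∀ t ∈ Set.Icc (0 : ℝ) T, ∀ n : M,
      K (e t) n + D (w t) n = -ε * ⟪mdot t, n⟫)
    (h0 : e 0 = 0) :
    ∀ t ∈ Set.Icc (0 : ℝ) T,
      ‖i (e t)‖ ^ 2 + c_L * (∫ s in (0:ℝ)..t, ‖e s‖ ^ 2) ≤
        ε ^ 2 * (C_K ^ 2 / (c_L * c_D ^ 2)) * Real.exp (2 * C_A * t) *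
          (∫ s in (0:ℝ)..t, ‖mdot s‖ ^ 2) := by
  intro t ht
  set B : ℝ := ε ^ 2 * (C_K ^ 2 / (c_L * c_D ^ 2)) with hB
  clear_value B
  have hBpos : 0 < B := by rw [hB]; positivity
  have hBval : B * (c_L * c_D ^ 2) = ε ^ 2 * C_K ^ 2 := by
    rw [hB]; field_simp
  set φ : ℝ → ℝ := fun s => ‖i (e s)‖ ^ 2 with hφ
  clear_value φ
  have hφcont : Continuous φ := by
    rw [hφ]
    exact ((i.continuous.comp hcont_e).norm).pow 2
  -- bound on Dinv
  have hDinvbd : ∀ f : StrongDual ℝ M, ‖Dinv f‖ ≤ ‖f‖ / c_D := by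
    intro f
    rcases eq_or_ne (Dinv f) 0 with h | h
    · rw [h, norm_zero]; positivity
    · have h1 : c_D * ‖Dinv f‖ ^ 2 ≤ D (Dinv f) (Dinv f) := hD _
      rw [hDinv₁] at h1
      have h2 : f (Dinv f) ≤ ‖f‖ * ‖Dinv f‖ :=
        le_trans (le_abs_self _) (by simpa using f.le_opNorm (Dinv f))
      have h3 : 0 < ‖Dinv f‖ := norm_pos_iff.mpr h
      rw [le_div_iff₀ hc_D]
      nlinarith
  -- formula for w
  have hw : ∀ s ∈ Set.Icc (0:ℝ) T,
      w s = -(ε • Dinv ((InnerProductSpace.toDual ℝ M) (mdot s))) - Dinv (K (e s)) := by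
    intro s hs
    have hDw : D (w s) = -(ε • ((InnerProductSpace.toDual ℝ M) (mdot s))) - K (e s) := by
      ext n
      have h := heq2 s hs n
      simp only [ContinuousLinearMap.sub_apply, ContinuousLinearMap.neg_apply,
        ContinuousLinearMap.smul_apply, InnerProductSpace.toDual_apply_apply, smul_eq_mul]
      linarith
    calc w s = Dinv (D (w s)) := (hDinv₂ _).symm
    _ = _ := by rw [hDw, map_sub, map_neg, map_smul]
  -- key pointwise estimate
  have hkey : ∀ s ∈ Set.Icc (0:ℝ) T,
      2 * (-(A (i (e s)) (i (e s))) + K (e s) (w s)) ≤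
        2 * C_A * φ s - c_L * ‖e s‖ ^ 2 + B * ‖mdot s‖ ^ 2 := by
    intro s hs
    set X : ℝ := K (e s) (Dinv ((InnerProductSpace.toDual ℝ M) (mdot s))) with hX
    set Y : ℝ := K (e s) (Dinv (K (e s))) with hY
    clear_value X Y
    have hKw : K (e s) (w s) = -(ε * X) - Y := by
      rw [hw s hs, map_sub, map_neg, map_smul, smul_eq_mul, ← hX, ← hY]
    have h1 : -(A (i (e s)) (i (e s))) ≤ C_A * ‖i (e s)‖ ^ 2 := by
      have := hA (i (e s)) (i (e s))
      have h2 := neg_abs_le (A (i (e s)) (i (e s)))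
      nlinarith [sq_nonneg ‖i (e s)‖]
    have h2 : c_L * ‖e s‖ ^ 2 ≤ Y := hY ▸ hL (e s)
    have h3 : |X| ≤ (C_K * ‖e s‖) * (‖mdot s‖ / c_D) := by
      have ha : |X| ≤ ‖K (e s)‖ * ‖Dinv ((InnerProductSpace.toDual ℝ M) (mdot s))‖ := by
        have := (K (e s)).le_opNorm (Dinv ((InnerProductSpace.toDual ℝ M) (mdot s)))
        rw [Real.norm_eq_abs] at this
        rw [hX]
        exact this
      have hb := hDinvbd ((InnerProductSpace.toDual ℝ M) (mdot s))
      rw [(InnerProductSpace.toDual ℝ M).norm_map] at hb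
      have hc := hKbd (e s)
      have := mul_le_mul hc hb (norm_nonneg _) (by positivity)
      calc |X| ≤ _ := ha
      _ ≤ _ := this
    have h3' : c_D * |X| ≤ C_K * ‖e s‖ * ‖mdot s‖ := by
      have h := mul_le_mul_of_nonneg_left h3 hc_D.le
      have heq : c_D * ((C_K * ‖e s‖) * (‖mdot s‖ / c_D)) = C_K * ‖e s‖ * ‖mdot s‖ := by
        field_simp
      linarith [heq ▸ h]
    have h4 : -X ≤ |X| := neg_le_abs X
    rw [hKw]
    have hφs : φ s = ‖i (e s)‖ ^ 2 := by rw [hφ]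
    rw [hφs]
    have hx1 : 2 * ε * c_D * |X| ≤ 2 * ε * (C_K * ‖e s‖ * ‖mdot s‖) := by nlinarith [h3', hε.le]
    have hBb : B * (c_L * c_D ^ 2) * ‖mdot s‖ ^ 2 = ε ^ 2 * C_K ^ 2 * ‖mdot s‖ ^ 2 := by
      rw [hBval]
    have hx2 : (2 * ε * (C_K * ‖e s‖ * ‖mdot s‖)) * (c_L * c_D) ≤
        (c_L * ‖e s‖ ^ 2 + B * ‖mdot s‖ ^ 2) * (c_L * c_D ^ 2) := by
      nlinarith [sq_nonneg (c_L * c_D * ‖e s‖ - ε * C_K * ‖mdot s‖), hBb]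
    have hx3 : (2 * ε * |X|) * (c_L * c_D ^ 2) ≤
        (c_L * ‖e s‖ ^ 2 + B * ‖mdot s‖ ^ 2) * (c_L * c_D ^ 2) := by
      calc (2 * ε * |X|) * (c_L * c_D ^ 2) = (2 * ε * c_D * |X|) * (c_L * c_D) := by ring
      _ ≤ (2 * ε * (C_K * ‖e s‖ * ‖mdot s‖)) * (c_L * c_D) :=
          mul_le_mul_of_nonneg_right hx1 (by positivity)
      _ ≤ _ := hx2
    have h5 : 2 * ε * |X| ≤ c_L * ‖e s‖ ^ 2 + B * ‖mdot s‖ ^ 2 :=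
      le_of_mul_le_mul_right hx3 (by positivity)
    have h4' : -(2 * (ε * X)) ≤ 2 * ε * |X| := by nlinarith [h4, hε.le]
    linarith [h1, h2, h4', h5]
  -- derivative of φ at interior points
  have hφd : ∀ τ ∈ Set.Ioo (0:ℝ) T,
      HasDerivAt φ (2 * (-(A (i (e τ)) (i (e τ))) + K (e τ) (w τ))) τ := by
    intro τ hτ
    have hτI : τ ∈ Set.Icc (0:ℝ) T := Set.mem_Icc_of_Ioo hτ
    set c : ℝ := -(A (i (e τ)) (i (e τ))) + K (e τ) (w τ) with hc
    rw [hasDerivAt_iff_isLittleO, Asymptotics.isLittleO_iff]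
    intro δ hδ
    have h2 := (Asymptotics.isLittleO_iff.mp
      (hasDerivAt_iff_isLittleO.mp (heq1 τ hτI (e τ)))) (half_pos hδ)
    simp only [← hc] at h2
    have hA2 : Continuous fun p : ℝ × ℝ => (A (i (e p.1))) (i (e p.2)) :=
      isBoundedBilinearMap_apply.continuous.comp
        (((A.continuous.comp (i.continuous.comp hcont_e)).comp continuous_fst).prodMk
          ((i.continuous.comp hcont_e).comp continuous_snd))
    have hK2 : Continuous fun p : ℝ × ℝ => (K (e p.2)) (w p.1) :=
      isBoundedBilinearMap_apply.continuous.comp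
        (((K.continuous.comp hcont_e).comp continuous_snd).prodMk (hcont_w.comp continuous_fst))
    have hΦ : ContinuousAt
        (fun p : ℝ × ℝ => -((A (i (e p.1))) (i (e p.2))) + (K (e p.2)) (w p.1)) (τ, τ) :=
      (hA2.neg.add hK2).continuousAt
    rw [Metric.continuousAt_iff] at hΦ
    obtain ⟨η₁, hη₁, hΦ⟩ := hΦ (δ / 2) (half_pos hδ)
    set η := min η₁ (min τ (T - τ)) with hη
    have hηpos : 0 < η := lt_min hη₁ (lt_min hτ.1 (by linarith [hτ.2]))
    have hηa : η ≤ η₁ := min_le_left _ _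
    have hηb : η ≤ τ := le_trans (min_le_right _ _) (min_le_left _ _)
    have hηc : η ≤ T - τ := le_trans (min_le_right _ _) (min_le_right _ _)
    have hball : Metric.ball τ η ⊆ Set.Icc 0 T := by
      intro r hr
      rw [Metric.mem_ball, Real.dist_eq, abs_lt] at hr
      constructor <;> linarith [hr.1, hr.2]
    filter_upwards [h2, Metric.ball_mem_nhds τ hηpos] with σ hσ2 hσ1
    have hmvt : ‖((⟪i (e σ), i (e σ)⟫ : ℝ) - c * σ) - ((⟪i (e τ), i (e σ)⟫ : ℝ) - c * τ)‖ ≤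
        δ / 2 * ‖σ - τ‖ := by
      refine Convex.norm_image_sub_le_of_norm_hasDerivWithin_le
        (f := fun r => (⟪i (e r), i (e σ)⟫ : ℝ) - c * r)
        (f' := fun r => (-((A (i (e r))) (i (e σ))) + (K (e σ)) (w r)) - c)
        (fun r hr => ?_) (fun r hr => ?_) (convex_ball τ η) (Metric.mem_ball_self hηpos) hσ1
      · have hlin : HasDerivAt (fun r : ℝ => c * r) c r := by
          simpa using (hasDerivAt_id r).const_mul c
        exact ((heq1 r (hball hr) (e σ)).sub hlin).hasDerivWithinAt
      · have hd : dist (r, σ) (τ, τ) < η₁ := by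
          rw [Prod.dist_eq]
          rw [Metric.mem_ball] at hr hσ1
          exact lt_of_lt_of_le (max_lt hr hσ1) hηa
        have := hΦ hd
        rw [Real.dist_eq] at this
        rw [Real.norm_eq_abs]
        exact le_of_lt this
    have hid : φ σ - φ τ - (σ - τ) • (2 * c) =
        (((⟪i (e σ), i (e σ)⟫ : ℝ) - c * σ) - ((⟪i (e τ), i (e σ)⟫ : ℝ) - c * τ)) +
        ((⟪i (e σ), i (e τ)⟫ : ℝ) - (⟪i (e τ), i (e τ)⟫ : ℝ) - (σ - τ) • c) := by
      rw [hφ]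
      simp only [smul_eq_mul]
      rw [← real_inner_self_eq_norm_sq, ← real_inner_self_eq_norm_sq,
        real_inner_comm (i (e τ)) (i (e σ))]
      ring
    rw [hid]
    calc ‖_ + _‖ ≤ _ + _ := norm_add_le _ _
    _ ≤ δ / 2 * ‖σ - τ‖ + δ / 2 * ‖σ - τ‖ := add_le_add hmvt hσ2
    _ = δ * ‖σ - τ‖ := by ring
  -- Gronwall-type argument
  have hecont : Continuous fun r => ‖e r‖ ^ 2 := (hcont_e.norm).pow 2
  have hmcont : Continuous fun r => ‖mdot r‖ ^ 2 := (hcont_m.norm).pow 2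
  have hexpc : Continuous fun r : ℝ => Real.exp (-(2 * C_A) * r) :=
    Real.continuous_exp.comp (continuous_const.mul continuous_id)
  set G : ℝ → ℝ := fun r => Real.exp (-(2 * C_A) * r) *
      (c_L * ‖e r‖ ^ 2 - B * ‖mdot r‖ ^ 2) with hG
  have hGcont : Continuous G := by
    rw [hG]
    exact hexpc.mul ((continuous_const.mul hecont).sub (continuous_const.mul hmcont))
  have hprim : ∀ s : ℝ, HasDerivAt (fun y => ∫ r in (0:ℝ)..y, G r) (G s) s := fun s =>
    intervalIntegral.integral_hasDerivAt_right (hGcont.intervalIntegrable _ _)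
      (hGcont.stronglyMeasurable.stronglyMeasurableAtFilter) hGcont.continuousAt
  set u : ℝ → ℝ := fun y => Real.exp (-(2 * C_A) * y) * φ y + ∫ r in (0:ℝ)..y, G r with hu
  have hucont : Continuous u := by
    rw [hu]
    exact (hexpc.mul hφcont).add
      (continuous_iff_continuousAt.mpr fun s => (hprim s).continuousAt)
  have huderiv : ∀ s ∈ Set.Ioo (0:ℝ) T, HasDerivAt u
      (Real.exp (-(2 * C_A) * s) * (-(2 * C_A)) * φ s
        + Real.exp (-(2 * C_A) * s) * (2 * (-(A (i (e s)) (i (e s))) + K (e s) (w s))) + G s) s := by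
    intro s hs
    have hexp : HasDerivAt (fun y : ℝ => Real.exp (-(2 * C_A) * y))
        (Real.exp (-(2 * C_A) * s) * (-(2 * C_A))) s := by
      simpa using ((hasDerivAt_id s).const_mul (-(2 * C_A))).exp
    rw [hu]
    exact (hexp.mul (hφd s hs)).add (hprim s)
  have hanti : AntitoneOn u (Set.Icc 0 T) := by
    apply antitoneOn_of_deriv_nonpos (convex_Icc 0 T) hucont.continuousOn
    · intro s hs
      rw [interior_Icc] at hs
      exact (huderiv s hs).differentiableAt.differentiableWithinAt
    · intro s hs
      rw [interior_Icc] at hs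
      rw [(huderiv s hs).deriv]
      have hk := hkey s (Set.mem_Icc_of_Ioo hs)
      have hGs : G s = Real.exp (-(2 * C_A) * s) * (c_L * ‖e s‖ ^ 2 - B * ‖mdot s‖ ^ 2) := by
        rw [hG]
      rw [hGs]
      nlinarith [mul_le_mul_of_nonneg_left hk (Real.exp_pos (-(2 * C_A) * s)).le]
  have hu0 : u 0 = 0 := by
    rw [hu]
    simp [hφ, h0]
  have hut : u t ≤ 0 := by
    rw [← hu0]
    exact hanti (Set.left_mem_Icc.mpr hT) ht ht.1
  -- unpack u t
  set Je := ∫ r in (0:ℝ)..t, Real.exp (-(2 * C_A) * r) * ‖e r‖ ^ 2 with hJe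
  set Jm := ∫ r in (0:ℝ)..t, Real.exp (-(2 * C_A) * r) * ‖mdot r‖ ^ 2 with hJm
  have hGint : (∫ r in (0:ℝ)..t, G r) = c_L * Je - B * Jm := by
    rw [hG, hJe, hJm, ← intervalIntegral.integral_const_mul, ← intervalIntegral.integral_const_mul,
      ← intervalIntegral.integral_sub
        ((show Continuous fun r => c_L * (Real.exp (-(2 * C_A) * r) * ‖e r‖ ^ 2) from
          continuous_const.mul (hexpc.mul hecont)).intervalIntegrable _ _)
        ((show Continuous fun r => B * (Real.exp (-(2 * C_A) * r) * ‖mdot r‖ ^ 2) from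
          continuous_const.mul (hexpc.mul hmcont)).intervalIntegrable _ _)]
    apply intervalIntegral.integral_congr
    intro r _
    ring
  simp only [hu] at hut
  rw [hGint] at hut
  set E := Real.exp (2 * C_A * t) with hE
  have hEinv : E * Real.exp (-(2 * C_A) * t) = 1 := by
    rw [hE, ← Real.exp_add, show 2 * C_A * t + -(2 * C_A) * t = 0 by ring, Real.exp_zero]
  have h7 : φ t + E * c_L * Je - E * B * Jm ≤ 0 := by
    have h := mul_le_mul_of_nonneg_left hut (Real.exp_pos (2 * C_A * t)).le
    rw [← hE] at h
    rw [mul_add, ← mul_assoc, hEinv, one_mul, mul_zero] at h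
    nlinarith [h]
  -- monotonicity of the weighted integrals
  have mono1 : (∫ r in (0:ℝ)..t, ‖e r‖ ^ 2) ≤ E * Je := by
    rw [hJe, ← intervalIntegral.integral_const_mul]
    apply intervalIntegral.integral_mono_on ht.1 (hecont.intervalIntegrable _ _)
      ((show Continuous fun r => E * (Real.exp (-(2 * C_A) * r) * ‖e r‖ ^ 2) from
        continuous_const.mul (hexpc.mul hecont)).intervalIntegrable _ _)
    intro r hr
    have hge1 : 1 ≤ E * Real.exp (-(2 * C_A) * r) := by
      rw [hE, ← Real.exp_add]
      apply Real.one_le_exp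
      nlinarith [mul_nonneg hC_A (sub_nonneg.mpr hr.2)]
    nlinarith [hge1, sq_nonneg ‖e r‖]
  have mono2 : Jm ≤ ∫ r in (0:ℝ)..t, ‖mdot r‖ ^ 2 := by
    rw [hJm]
    apply intervalIntegral.integral_mono_on ht.1
      ((show Continuous fun r => Real.exp (-(2 * C_A) * r) * ‖mdot r‖ ^ 2 from
        hexpc.mul hmcont).intervalIntegrable _ _) (hmcont.intervalIntegrable _ _)
    intro r hr
    have hle1 : Real.exp (-(2 * C_A) * r) ≤ 1 := by
      apply Real.exp_le_one_iff.mpr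
      nlinarith [mul_nonneg hC_A hr.1]
    nlinarith [hle1, sq_nonneg ‖mdot r‖, Real.exp_pos (-(2 * C_A) * r)]
  -- conclude
  have hphit : ‖i (e t)‖ ^ 2 = φ t := by rw [hφ]
  rw [hphit]
  have m1 : c_L * (∫ r in (0:ℝ)..t, ‖e r‖ ^ 2) ≤ c_L * (E * Je) :=
    mul_le_mul_of_nonneg_left mono1 hc_L.le
  have m2 : E * B * Jm ≤ E * B * (∫ r in (0:ℝ)..t, ‖mdot r‖ ^ 2) :=
    mul_le_mul_of_nonneg_left mono2 (by positivity)
  nlinarith [m1, m2, h7]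
end
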